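/- Let ℓ be an even integer with ℓ ≥ 4, set ℓ′ = ℓ/2, let ε ∈ ℂ be a primitive ℓ-th root of unity, and let λ ∈ ℂ with λ ≠ 0. Let V = ℂ^{ℓ} with basis {vₙ : 0 ≤ n ≤ ℓ−1} and define ℂ-linear endomorphisms a₊, a₋, w of V by: a₊·vₙ = v_{n+1} for 0 ≤ n ≤ ℓ−2 and a₊·v_{ℓ−1} = λ·v₀; a₋·vₙ = [n]_ε·v_{n−1} for 1 ≤ n ≤ ℓ−1 and a₋·v₀ = 0; w·vₙ = εⁿ·vₙ. Then: (1) w is invertible and a₊, a₋, w, w⁻¹ satisfy the q-oscillator relations with q = ε; (2) a₋ acts nilpotently, with a₋^{ℓ′} = 0, while a₊^ℓ = λ·id_V; (3) V is an irreducible semicyclic module: every ℂ-subspace of V invariant under a₊, a₋ and w is {0} or V. -/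
import Mathlib

/-- The `q`-integer `[n]_q = ∑_{i=1}^{n} q^{n+1-2i}` for a nonzero complex
number `q`. -/
noncomputable def qIntC (q : ℂ) (n : ℕ) : ℂ :=
  ∑ i ∈ Finset.range n, q ^ ((n : ℤ) - 1 - 2 * (i : ℤ))

lemma qIntC_succ_left (q : ℂ) (hq : q ≠ 0) (n : ℕ) :
    qIntC q (n + 1) = q * qIntC q n + q ^ (-(n : ℤ)) := by
  unfold qIntC
  rw [Finset.sum_range_succ, Finset.mul_sum]
  congr 1
  · refine Finset.sum_congr rfl fun i _ => ?_
    rw [← zpow_one_add₀ hq]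
    congr 1; push_cast; ring
  · congr 1; push_cast; ring

lemma qIntC_succ_right (q : ℂ) (hq : q ≠ 0) (n : ℕ) :
    qIntC q (n + 1) = q⁻¹ * qIntC q n + q ^ (n : ℤ) := by
  unfold qIntC
  rw [Finset.sum_range_succ', Finset.mul_sum]
  congr 1
  · refine Finset.sum_congr rfl fun i _ => ?_
    rw [← zpow_neg_one, ← zpow_add₀ hq]
    congr 1; push_cast; ring
  · congr 1; push_cast; ring

lemma qIntC_mul_sub (q : ℂ) (hq : q ≠ 0) (n : ℕ) :
    (q - q⁻¹) * qIntC q n = q ^ (n : ℤ) - q ^ (-(n : ℤ)) := by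
  induction n with
  | zero => simp [qIntC]
  | succ n ih =>
    rw [qIntC_succ_left q hq n]
    have h1 : q ^ ((n : ℤ) + 1) = q * q ^ (n : ℤ) := by
      rw [← zpow_one_add₀ hq]; ring_nf
    have h2 : q ^ (-((n : ℤ) + 1)) = q⁻¹ * q ^ (-(n : ℤ)) := by
      rw [← zpow_neg_one, ← zpow_add₀ hq]; ring_nf
    push_cast
    rw [h1, h2]
    linear_combination q * ih

/-- the `ℓ`-dimensional semicyclic module `V_{λ,0}` (with `λ ≠ 0`)
of the `q`-oscillator algebra at an even primitive `ℓ`-th root of unity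
(`ℓ ≥ 4`, `ℓ′ = ℓ/2`): the operators satisfy the `q`-oscillator relations,
`a₋^{ℓ′} = 0` while `a₊^ℓ = λ·id`, and the module is irreducible. -/
theorem q_oscillator_even_root_semicyclic
    (ℓ ℓ' : ℕ) (hl : 4 ≤ ℓ) (hl' : 2 * ℓ' = ℓ)
    (ε : ℂ) (hε : IsPrimitiveRoot ε ℓ)
    (lam : ℂ) (hlam : lam ≠ 0)
    (ap am w : Module.End ℂ (Fin ℓ → ℂ))
    (v : Fin ℓ → Fin ℓ → ℂ) (hv : ∀ n, v n = Pi.single n 1)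
    (hap1 : ∀ (n : ℕ) (h : n + 1 < ℓ), ap (v ⟨n, by omega⟩) = v ⟨n + 1, h⟩)
    (hap2 : ap (v ⟨ℓ - 1, by omega⟩) = lam • v ⟨0, by omega⟩)
    (ham1 : ∀ (n : ℕ) (h : n + 1 < ℓ),
      am (v ⟨n + 1, h⟩) = qIntC ε (n + 1) • v ⟨n, by omega⟩)
    (ham2 : am (v ⟨0, by omega⟩) = 0)
    (hw : ∀ n : Fin ℓ, w (v n) = ε ^ (n : ℕ) • v n) :
    (∃ winv : Module.End ℂ (Fin ℓ → ℂ),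
      w * winv = 1 ∧ winv * w = 1 ∧
      w * ap * winv = ε • ap ∧
      w * am * winv = ε⁻¹ • am ∧
      am * ap - ε • (ap * am) = winv ∧
      am * ap - ε⁻¹ • (ap * am) = w) ∧
    am ^ ℓ' = 0 ∧
    ap ^ ℓ = lam • (1 : Module.End ℂ (Fin ℓ → ℂ)) ∧
    (∀ p : Submodule ℂ (Fin ℓ → ℂ),
      (∀ x ∈ p, ap x ∈ p) → (∀ x ∈ p, am x ∈ p) → (∀ x ∈ p, w x ∈ p) →
      p = ⊥ ∨ p = ⊤) := by
  -- basic facts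
  have hε0 : ε ≠ 0 := hε.ne_zero (by omega)
  have hεl : ε ^ ℓ = 1 := hε.pow_eq_one
  have hvcast : ∀ (a b : ℕ) (ha : a < ℓ) (hb : b < ℓ), a = b → v ⟨a, ha⟩ = v ⟨b, hb⟩ := by
    intro a b ha hb h; subst h; rfl
  -- w-action extensionality
  have hext : ∀ f g : Module.End ℂ (Fin ℓ → ℂ), (∀ n, f (v n) = g (v n)) → f = g := by
    intro f g h
    apply (Pi.basisFun ℂ (Fin ℓ)).ext
    intro n
    rw [Pi.basisFun_apply, ← hv n]
    exact h n
  -- ε - ε⁻¹ ≠ 0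
  have hε2 : ε - ε⁻¹ ≠ 0 := by
    intro h
    have h2 : ε ^ 2 = 1 := by
      have : ε = ε⁻¹ := by linear_combination h
      field_simp at this
      linear_combination this
    have hd := (hε.pow_eq_one_iff_dvd 2).mp h2
    have := Nat.le_of_dvd (by norm_num) hd
    omega
  -- ε^{ℓ'} = -1
  have hεl' : ε ^ ℓ' = -1 := by
    have hsq : (ε ^ ℓ') ^ 2 = 1 := by
      rw [← pow_mul, mul_comm, hl', hεl]
    have hne : ε ^ ℓ' ≠ 1 := by
      intro h
      have hd := (hε.pow_eq_one_iff_dvd ℓ').mp h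
      have := Nat.le_of_dvd (by omega) hd
      omega
    have : (ε ^ ℓ' - 1) * (ε ^ ℓ' + 1) = 0 := by ring_nf; linear_combination hsq
    rcases mul_eq_zero.mp this with h | h
    · exact absurd (by linear_combination h) hne
    · linear_combination h
  -- qIntC values
  have hq1 : qIntC ε 1 = 1 := by simp [qIntC]
  have hqm : qIntC ε ℓ' = 0 := by
    have h0 : (ε - ε⁻¹) * qIntC ε ℓ' = 0 := by
      rw [qIntC_mul_sub ε hε0, zpow_natCast, zpow_neg, zpow_natCast, hεl']
      norm_num
    rcases mul_eq_zero.mp h0 with h | h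
    · exact absurd h hε2
    · exact h
  have hql : qIntC ε (ℓ - 1) = -1 := by
    have heps : ε ^ (ℓ - 1) = ε⁻¹ := by
      have : ε ^ (ℓ - 1) * ε = 1 := by
        rw [← pow_succ]
        have : ℓ - 1 + 1 = ℓ := by omega
        rw [this, hεl]
      field_simp
      linear_combination this
    have h := qIntC_mul_sub ε hε0 (ℓ - 1)
    rw [zpow_natCast, zpow_neg, zpow_natCast, heps, inv_inv] at h
    have h2 : (ε - ε⁻¹) * qIntC ε (ℓ - 1) = (ε - ε⁻¹) * (-1) := by
      rw [h]; ring
    exact mul_left_cancel₀ hε2 h2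
  -- recurrences with nat powers
  have hR1 : ∀ n : ℕ, qIntC ε (n + 1) - ε * qIntC ε n = (ε ^ n)⁻¹ := by
    intro n
    rw [qIntC_succ_left ε hε0, zpow_neg, zpow_natCast]
    ring
  have hR2 : ∀ n : ℕ, qIntC ε (n + 1) - ε⁻¹ * qIntC ε n = ε ^ n := by
    intro n
    rw [qIntC_succ_right ε hε0, zpow_natCast]
    ring
  have hinv : (ε ^ (ℓ - 1))⁻¹ = ε := by
    have h1 : ε ^ (ℓ - 1) * ε = 1 := by
      rw [← pow_succ]
      have h2 : ℓ - 1 + 1 = ℓ := by omega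
      rw [h2, hεl]
    exact inv_eq_of_mul_eq_one_right h1
  -- the inverse of w
  set winv : Module.End ℂ (Fin ℓ → ℂ) :=
    LinearMap.pi (fun i : Fin ℓ => (ε ^ (i : ℕ))⁻¹ • LinearMap.proj i) with hwdef
  have hwinv : ∀ n : Fin ℓ, winv (v n) = (ε ^ (n : ℕ))⁻¹ • v n := by
    intro n
    funext m
    rw [hv]
    simp only [hwdef, LinearMap.pi_apply, LinearMap.smul_apply, LinearMap.proj_apply,
      Pi.smul_apply, smul_eq_mul]
    rcases eq_or_ne m n with h | h
    · subst h; simp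
    · simp [Pi.single_apply, h]
  refine ⟨⟨winv, ?_, ?_, ?_, ?_, ?_, ?_⟩, ?_, ?_, ?_⟩
  · -- w * winv = 1
    apply hext
    intro n
    rw [Module.End.mul_apply, hwinv, map_smul, hw, Module.End.one_apply, smul_smul,
      inv_mul_cancel₀ (pow_ne_zero _ hε0), one_smul]
  · -- winv * w = 1
    apply hext
    intro n
    rw [Module.End.mul_apply, hw, map_smul, hwinv, Module.End.one_apply, smul_smul,
      mul_inv_cancel₀ (pow_ne_zero _ hε0), one_smul]
  · -- w * ap * winv = ε • ap
    apply hext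
    rintro ⟨n, hn⟩
    rw [Module.End.mul_apply, Module.End.mul_apply, LinearMap.smul_apply, hwinv, map_smul,
      map_smul]
    by_cases h : n + 1 < ℓ
    · rw [hap1 n h, hw ⟨n + 1, h⟩, smul_smul]
      congr 1
      show (ε ^ n)⁻¹ * ε ^ (n + 1) = ε
      rw [pow_succ, ← mul_assoc, inv_mul_cancel₀ (pow_ne_zero _ hε0), one_mul]
    · have hn1 : n = ℓ - 1 := by omega
      subst hn1
      rw [hap2, map_smul, hw ⟨0, by omega⟩, smul_smul, smul_smul, smul_smul]
      congr 1
      show (ε ^ (ℓ - 1))⁻¹ * lam * ε ^ (0 : ℕ) = ε * lam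
      rw [hinv, pow_zero]
      ring
  · -- w * am * winv = ε⁻¹ • am
    apply hext
    rintro ⟨n, hn⟩
    rw [Module.End.mul_apply, Module.End.mul_apply, LinearMap.smul_apply, hwinv, map_smul,
      map_smul]
    cases n with
    | zero =>
      rw [ham2]
      simp
    | succ m =>
      rw [ham1 m hn, map_smul, hw ⟨m, by omega⟩, smul_smul, smul_smul, smul_smul]
      congr 1
      show (ε ^ (m + 1))⁻¹ * qIntC ε (m + 1) * ε ^ m = ε⁻¹ * qIntC ε (m + 1)
      have hne : (ε : ℂ) ^ (m + 1) ≠ 0 := pow_ne_zero _ hε0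
      field_simp
      ring
  · -- am * ap - ε • (ap * am) = winv
    apply hext
    rintro ⟨n, hn⟩
    rw [LinearMap.sub_apply, Module.End.mul_apply, LinearMap.smul_apply, Module.End.mul_apply,
      hwinv]
    by_cases h : n + 1 < ℓ
    · rw [hap1 n h, ham1 n h]
      cases n with
      | zero =>
        rw [ham2, map_zero, smul_zero, sub_zero, hq1, pow_zero, inv_one, one_smul]
      | succ m =>
        rw [ham1 m (by omega), map_smul, hap1 m (by omega), smul_smul, ← sub_smul]
        congr 1
        exact hR1 (m + 1)
    · have hn1 : n = ℓ - 1 := by omega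
      subst hn1
      rw [hap2, map_smul, ham2, smul_zero, zero_sub,
        hvcast (ℓ - 1) (ℓ - 2 + 1) hn (by omega) (by omega), ham1 (ℓ - 2) (by omega),
        map_smul, hap1 (ℓ - 2) (by omega), hvcast (ℓ - 2 + 1) (ℓ - 1) (by omega) hn (by omega)]
      have h2 : ℓ - 2 + 1 = ℓ - 1 := by omega
      rw [h2, hql, smul_smul, hinv, ← neg_smul]
      congr 1
      ring
  · -- am * ap - ε⁻¹ • (ap * am) = w
    apply hext
    rintro ⟨n, hn⟩
    rw [LinearMap.sub_apply, Module.End.mul_apply, LinearMap.smul_apply, Module.End.mul_apply,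
      hw]
    by_cases h : n + 1 < ℓ
    · rw [hap1 n h, ham1 n h]
      cases n with
      | zero =>
        rw [ham2, map_zero, smul_zero, sub_zero, hq1, pow_zero, one_smul]
      | succ m =>
        rw [ham1 m (by omega), map_smul, hap1 m (by omega), smul_smul, ← sub_smul]
        congr 1
        exact hR2 (m + 1)
    · have hn1 : n = ℓ - 1 := by omega
      subst hn1
      rw [hap2, map_smul, ham2, smul_zero, zero_sub,
        hvcast (ℓ - 1) (ℓ - 2 + 1) hn (by omega) (by omega), ham1 (ℓ - 2) (by omega),
        map_smul, hap1 (ℓ - 2) (by omega), hvcast (ℓ - 2 + 1) (ℓ - 1) (by omega) hn (by omega)]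
      have h2 : ℓ - 2 + 1 = ℓ - 1 := by omega
      have h1' : ε ^ (ℓ - 1) * ε = 1 := by
        rw [← pow_succ, show ℓ - 1 + 1 = ℓ from by omega, hεl]
      have heps : ε ^ (ℓ - 1) = ε⁻¹ := by
        rw [← inv_inv (ε ^ (ℓ - 1)), hinv]
      rw [h2, hql, smul_smul, heps, ← neg_smul]
      congr 1
      ring
  · -- am ^ ℓ' = 0
    have hL1 : ∀ (n : ℕ) (k : ℕ) (hn : n < ℓ), n < k → (am ^ k) (v ⟨n, hn⟩) = 0 := by
      intro n
      induction n with
      | zero =>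
        intro k hn hk
        obtain ⟨j, rfl⟩ : ∃ j, k = j + 1 := ⟨k - 1, by omega⟩
        rw [pow_succ, Module.End.mul_apply, ham2, map_zero]
      | succ m ih =>
        intro k hn hk
        obtain ⟨j, rfl⟩ : ∃ j, k = j + 1 := ⟨k - 1, by omega⟩
        rw [pow_succ, Module.End.mul_apply, ham1 m hn, map_smul, ih j (by omega) (by omega),
          smul_zero]
    have hL2 : ∀ (k n : ℕ) (hn : n < ℓ), k ≤ n →
        ∃ c : ℂ, (am ^ k) (v ⟨n, hn⟩) = c • v ⟨n - k, by omega⟩ := by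
      intro k
      induction k with
      | zero =>
        intro n hn _
        exact ⟨1, by simp⟩
      | succ j ih =>
        intro n hn hkn
        obtain ⟨m, rfl⟩ : ∃ m, n = m + 1 := ⟨n - 1, by omega⟩
        rw [pow_succ, Module.End.mul_apply, ham1 m hn, map_smul]
        obtain ⟨c, hc⟩ := ih m (by omega) (by omega)
        refine ⟨qIntC ε (m + 1) * c, ?_⟩
        rw [hc, smul_smul, hvcast (m - j) (m + 1 - (j + 1)) (by omega) (by omega) (by omega)]
    apply hext
    rintro ⟨n, hn⟩
    rw [LinearMap.zero_apply]
    by_cases hc : n < ℓ'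
    · exact hL1 n ℓ' hn hc
    · obtain ⟨c, hc2⟩ := hL2 (n - ℓ') n hn (by omega)
      have hsplit : am ^ ℓ' = am ^ (ℓ' - (n - ℓ') - 1) * am * am ^ (n - ℓ') := by
        rw [← pow_succ, ← pow_add]
        congr 1
        omega
      rw [hsplit, Module.End.mul_apply, hc2, map_smul, Module.End.mul_apply,
        hvcast (n - (n - ℓ')) (ℓ' - 1 + 1) (by omega) (by omega) (by omega),
        ham1 (ℓ' - 1) (by omega)]
      have hq0 : qIntC ε (ℓ' - 1 + 1) = 0 := by
        rw [show ℓ' - 1 + 1 = ℓ' from by omega]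
        exact hqm
      rw [hq0, zero_smul, map_zero, smul_zero]
  · -- ap ^ ℓ = lam • 1
    have hP : ∀ (k n : ℕ) (h : n + k < ℓ), (ap ^ k) (v ⟨n, by omega⟩) = v ⟨n + k, h⟩ := by
      intro k
      induction k with
      | zero =>
        intro n h
        rw [pow_zero, Module.End.one_apply]
        exact hvcast n (n + 0) (by omega) (by omega) (by omega)
      | succ k ih =>
        intro n h
        rw [pow_succ', Module.End.mul_apply, ih n (by omega), hap1 (n + k) (by omega)]
        exact hvcast _ _ _ _ (by omega)
    apply hext
    rintro ⟨n, hn⟩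
    have hsplit : ap ^ ℓ = ap ^ n * ap * ap ^ (ℓ - 1 - n) := by
      rw [← pow_succ, ← pow_add]
      congr 1
      omega
    rw [hsplit, Module.End.mul_apply, hP (ℓ - 1 - n) n (by omega),
      hvcast (n + (ℓ - 1 - n)) (ℓ - 1) (by omega) (by omega) (by omega),
      Module.End.mul_apply, hap2, map_smul, hP n 0 (by omega),
      hvcast (0 + n) n (by omega) hn (by omega), LinearMap.smul_apply, Module.End.one_apply]
  · -- irreducibility
    intro p hp hm hwp
    classical
    by_cases hbot : p = ⊥
    · left; exact hbot
    right
    obtain ⟨x, hxp, hx0⟩ := (Submodule.ne_bot_iff p).mp hbot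
    have hsingle : ∀ (y : Fin ℓ → ℂ) (i : Fin ℓ), Pi.single i (y i) = y i • v i := by
      intro y i
      rw [hv]
      funext j
      rcases eq_or_ne j i with h | h
      · subst h; simp
      · simp [Pi.single_apply, h]
    have hsum : ∀ y : Fin ℓ → ℂ, y = ∑ i, y i • v i :=
      fun y => ((Finset.univ_sum_single y).symm).trans
        (Finset.sum_congr rfl fun i _ => hsingle y i)
    have hwc : ∀ (y : Fin ℓ → ℂ) (m : Fin ℓ), w y m = ε ^ (m : ℕ) * y m := by
      intro y m
      conv_lhs => rw [hsum y]
      rw [map_sum]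
      simp only [map_smul, hw]
      rw [Finset.sum_apply]
      have hterm : ∀ i : Fin ℓ, (y i • ε ^ (i : ℕ) • v i) m
          = if i = m then ε ^ (m : ℕ) * y m else 0 := by
        intro i
        rw [hv]
        rcases eq_or_ne i m with h | h
        · subst h; simp [Pi.single_apply]; ring
        · simp [Pi.single_apply, Ne.symm h, h]
      rw [Finset.sum_congr rfl fun i _ => hterm i, Finset.sum_ite_eq']
      simp
    -- extract a basis vector lying in p
    have hbasis_mem : ∃ n : Fin ℓ, v n ∈ p := by
      have main : ∀ N : ℕ, ∀ y : Fin ℓ → ℂ, y ∈ p → y ≠ 0 →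
          (Finset.univ.filter fun m : Fin ℓ => y m ≠ 0).card ≤ N → ∃ n : Fin ℓ, v n ∈ p := by
        intro N
        induction N with
        | zero =>
          intro y hyp hy0 hcard
          exfalso
          apply hy0
          funext m
          show y m = 0
          by_contra hmne
          have hmem : m ∈ Finset.univ.filter fun m : Fin ℓ => y m ≠ 0 := by
            simp [hmne]
          have := Finset.card_pos.mpr ⟨m, hmem⟩
          omega
        | succ N ih =>
          intro y hyp hy0 hcard
          obtain ⟨n₀, hn₀⟩ : ∃ n₀ : Fin ℓ, y n₀ ≠ 0 := by
            by_contra hcon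
            push_neg at hcon
            exact hy0 (funext fun m => hcon m)
          set z : Fin ℓ → ℂ := w y - ε ^ (n₀ : ℕ) • y with hzdef
          have hzp : z ∈ p := sub_mem (hwp y hyp) (Submodule.smul_mem p _ hyp)
          have hzc : ∀ m : Fin ℓ, z m = (ε ^ (m : ℕ) - ε ^ (n₀ : ℕ)) * y m := by
            intro m
            rw [hzdef]
            simp only [Pi.sub_apply, Pi.smul_apply, smul_eq_mul, hwc y m]
            ring
          by_cases hz0 : z = 0
          · refine ⟨n₀, ?_⟩
            have hyform : y = y n₀ • v n₀ := by
              funext m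
              rcases eq_or_ne m n₀ with h | h
              · subst h
                rw [hv]
                simp
              · have hzm : z m = 0 := by rw [hz0]; rfl
                rw [hzc m] at hzm
                have hd : ε ^ (m : ℕ) - ε ^ (n₀ : ℕ) ≠ 0 := by
                  intro he
                  have hval : (m : ℕ) = (n₀ : ℕ) :=
                    hε.pow_inj m.isLt n₀.isLt (by linear_combination he)
                  exact h (Fin.ext hval)
                have hym : y m = 0 := by
                  rcases mul_eq_zero.mp hzm with h' | h'
                  · exact absurd h' hd
                  · exact h'
                rw [hym, hv]
                simp [Pi.single_apply, h]
            have hvform : v n₀ = (y n₀)⁻¹ • y := by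
              calc v n₀ = (y n₀)⁻¹ • (y n₀ • v n₀) := by
                    rw [smul_smul, inv_mul_cancel₀ hn₀, one_smul]
                _ = (y n₀)⁻¹ • y := by rw [← hyform]
            rw [hvform]
            exact Submodule.smul_mem p _ hyp
          · apply ih z hzp hz0
            have hsub : (Finset.univ.filter fun m : Fin ℓ => z m ≠ 0)
                ⊆ (Finset.univ.filter fun m : Fin ℓ => y m ≠ 0).erase n₀ := by
              intro m hmem
              simp only [Finset.mem_filter, Finset.mem_erase, Finset.mem_univ, true_and] at hmem ⊢
              constructor
              · intro he
                subst he
                apply hmem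
                rw [hzc]
                simp
              · intro hy
                apply hmem
                rw [hzc, hy, mul_zero]
            have hn₀mem : n₀ ∈ Finset.univ.filter fun m : Fin ℓ => y m ≠ 0 := by
              simp [hn₀]
            have hce := Finset.card_erase_of_mem hn₀mem
            have := Finset.card_le_card hsub
            omega
      exact main _ x hxp hx0 le_rfl
    obtain ⟨n, hnp⟩ := hbasis_mem
    -- from v (ℓ-1) we get v 0
    have hlast : v ⟨ℓ - 1, by omega⟩ ∈ p → v ⟨0, by omega⟩ ∈ p := by
      intro hmem
      have hap := hp _ hmem
      rw [hap2] at hap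
      have h0 : v ⟨0, by omega⟩ = lam⁻¹ • (lam • v ⟨0, by omega⟩) := by
        rw [smul_smul, inv_mul_cancel₀ hlam, one_smul]
      rw [h0]
      exact Submodule.smul_mem p _ hap
    -- from any v m we get v 0
    have hdown : ∀ (k m : ℕ) (hm : m < ℓ), ℓ - 1 - m ≤ k → v ⟨m, hm⟩ ∈ p →
        v ⟨0, by omega⟩ ∈ p := by
      intro k
      induction k with
      | zero =>
        intro m hm hk hmem
        have hme : m = ℓ - 1 := by omega
        subst hme
        exact hlast hmem
      | succ k ih =>
        intro m hm hk hmem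
        by_cases h : m + 1 < ℓ
        · have hap := hp _ hmem
          rw [hap1 m h] at hap
          exact ih (m + 1) h (by omega) hap
        · have hme : m = ℓ - 1 := by omega
          subst hme
          exact hlast hmem
    -- from v 0 we get every v m
    have hup : ∀ (m : ℕ) (hm : m < ℓ), v ⟨0, by omega⟩ ∈ p → v ⟨m, hm⟩ ∈ p := by
      intro m
      induction m with
      | zero => intro hm h; exact h
      | succ k ih =>
        intro hm h
        have hap := hp _ (ih (by omega) h)
        rw [hap1 k hm] at hap
        exact hap
    have h0 : v ⟨0, by omega⟩ ∈ p := hdown ℓ (n : ℕ) n.isLt (by omega) hnp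
    rw [eq_top_iff]
    intro y _
    have hymem : ∑ i : Fin ℓ, y i • v i ∈ p :=
      Submodule.sum_mem p fun i _ => Submodule.smul_mem p _
        (by rcases i with ⟨i, hi⟩; exact hup i hi h0)
    rw [hsum y]
    exact hymem
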